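/- Suppose g satisfies Assumption 1: g is ρ_g-gradient Lipschitz in z=(x,y), convex in y for each x, and g(x',y') ≥ g(x,y) + ⟨∇_x g(x,y), x'-x⟩ + ⟨∇_y g(x,y), y'-y⟩ - (ρ_g/2)‖x-x'‖² for all x,x',y,y'. Moreover suppose the smoothed value function g̃*(x) = min_y [g(x,y) + (α/2)‖y‖²] satisfies the smoothness bound making it (ρ_g + ρ_g²/α)-smooth (so in particular g̃*(x') ≤ g̃*(x) + ⟨∇g̃*(x), x'-x⟩ + ((ρ_g + ρ_g²/α)/2)‖x'-x‖²). Let ρ = (2αρ_g + ρ_g²)/(2α). Then h̃_k(x,y) := g(x,y) - g̃*(x) - δ + ρ‖x - x̃_{k-1}‖² is a convex function of (x,y) for any fixed x̃_{k-1}. -/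
import Mathlib


open RealInnerProductSpace

theorem stmt_9 {E F : Type*} [NormedAddCommGroup E] [InnerProductSpace ℝ E] [CompleteSpace E]
    [NormedAddCommGroup F] [InnerProductSpace ℝ F] [CompleteSpace F]
    (g : E → F → ℝ) (Gx : E → F → E) (Gy : E → F → F)
    (gstar : E → ℝ) (Gstar : E → E) (α δ ρg : ℝ) (hα : 0 < α) (hρg : 0 ≤ ρg)
    (hGx : ∀ x y, HasGradientAt (fun x' => g x' y) (Gx x y) x)
    (hGy : ∀ x y, HasGradientAt (fun y' => g x y') (Gy x y) y)
    (hGstar : ∀ x, HasGradientAt gstar (Gstar x) x)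
    (hconvy : ∀ x, ConvexOn ℝ Set.univ (g x))
    (hLipg : ∀ (x x' : E) (y y' : F), ‖Gx x y - Gx x' y'‖ + ‖Gy x y - Gy x' y'‖
        ≤ ρg * (‖x - x'‖ + ‖y - y'‖))
    (hlower : ∀ x x' y y', g x' y' ≥ g x y + ⟪Gx x y, x' - x⟫ + ⟪Gy x y, y' - y⟫
        - ρg/2 * ‖x - x'‖^2)
    (hupper : ∀ x x', gstar x' ≤ gstar x + ⟪Gstar x, x' - x⟫
        + ((ρg + ρg^2/α)/2) * ‖x' - x‖^2)
    (xk : E) :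
    ConvexOn ℝ Set.univ
      (fun z : E × F => g z.1 z.2 - gstar z.1 - δ
        + ((2*α*ρg + ρg^2)/(2*α)) * ‖z.1 - xk‖^2) := by
  set ρ : ℝ := (2*α*ρg + ρg^2)/(2*α) with hρ
  have key : ∀ x x' y y',
      g x' y' - gstar x' - δ + ρ * ‖x' - xk‖^2 ≥
      (g x y - gstar x - δ + ρ * ‖x - xk‖^2)
      + ⟪Gx x y - Gstar x + (2*ρ) • (x - xk), x' - x⟫ + ⟪Gy x y, y' - y⟫ := by
    intro x x' y y'
    have h1 := hlower x x' y y'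
    have h2 := hupper x x'
    have h3 : ‖x' - xk‖^2 = ‖x - xk‖^2 + 2*⟪x - xk, x' - x⟫ + ‖x' - x‖^2 := by
      have hxx : x' - xk = (x - xk) + (x' - x) := by abel
      rw [hxx, norm_add_sq_real]
    have h4 : ⟪Gx x y - Gstar x + (2*ρ) • (x - xk), x' - x⟫
        = ⟪Gx x y, x' - x⟫ - ⟪Gstar x, x' - x⟫ + 2*ρ*⟪x - xk, x' - x⟫ := by
      rw [inner_add_left, inner_sub_left, real_inner_smul_left]
    have hsq : ‖x - x'‖^2 = ‖x' - x‖^2 := by rw [norm_sub_rev]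
    have hcoef : ρ = ρg/2 + (ρg + ρg^2/α)/2 := by
      rw [hρ]; field_simp; ring
    have hzero : ρ * ‖x' - x‖^2 = ρg/2 * ‖x' - x‖^2 + (ρg + ρg^2/α)/2 * ‖x' - x‖^2 := by
      rw [hcoef]; ring
    have h3' : ρ * ‖x' - xk‖^2 = ρ * ‖x - xk‖^2 + 2*ρ*⟪x - xk, x' - x⟫ + ρ * ‖x' - x‖^2 := by
      rw [h3]; ring
    rw [hsq] at h1
    linarith
  refine ⟨convex_univ, ?_⟩
  rintro ⟨x, y⟩ - ⟨x', y'⟩ - t s ht hs hts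
  simp only [Prod.smul_mk, Prod.mk_add_mk, smul_eq_mul, Prod.fst, Prod.snd]
  set a := t • x + s • x' with ha
  set b := t • y + s • y' with hb
  have k1 := key a x b y
  have k2 := key a x' b y'
  have e1 : t • (x - a) + s • (x' - a) = 0 := by
    have : t • (x - a) + s • (x' - a) = (t • x + s • x') - (t + s) • a := by
      rw [add_smul]; module
    rw [this, hts, one_smul, ha, sub_self]
  have e2 : t • (y - b) + s • (y' - b) = 0 := by
    have : t • (y - b) + s • (y' - b) = (t • y + s • y') - (t + s) • b := by
      rw [add_smul]; module
    rw [this, hts, one_smul, hb, sub_self]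
  have i1 : t * ⟪Gx a b - Gstar a + (2*ρ) • (a - xk), x - a⟫
      + s * ⟪Gx a b - Gstar a + (2*ρ) • (a - xk), x' - a⟫ = 0 := by
    rw [← real_inner_smul_right, ← real_inner_smul_right, ← inner_add_right, e1,
      inner_zero_right]
  have i2 : t * ⟪Gy a b, y - b⟫ + s * ⟪Gy a b, y' - b⟫ = 0 := by
    rw [← real_inner_smul_right, ← real_inner_smul_right, ← inner_add_right, e2,
      inner_zero_right]
  have hone : t * (g a b - gstar a - δ + ρ * ‖a - xk‖^2)
      + s * (g a b - gstar a - δ + ρ * ‖a - xk‖^2)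
      = g a b - gstar a - δ + ρ * ‖a - xk‖^2 := by
    rw [← add_mul, hts, one_mul]
  nlinarith [mul_le_mul_of_nonneg_left k1 ht, mul_le_mul_of_nonneg_left k2 hs]
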